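/- Let (L, [·,·], α) be a Hom-Lie algebra over a field k of characteristic 0, τ : L → k a trace function (a linear form with τ([x,y]) = 0 for all x,y), and β : L → L a linear map such that for all x,y ∈ L: τ(α(x))τ(y) = τ(x)τ(α(y)), τ(β(x))τ(y) = τ(x)τ(β(y)), and τ(α(x))β(y) = τ(β(x))α(y). Suppose a ∈ L satisfies α(a) = a. Define [x,y]'_τ = τ(a)[x,y] + [a, τ(y)x − τ(x)y]. Then L'_τ = (L, [·,·]'_τ, β) is a Hom-Lie algebra. -/
import Mathlib


/-- The reduced bracket `[x,y]'_τ = τ(a)[x,y] + [a, τ(y)x − τ(x)y]`. -/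
def tauBracket {k L : Type*} [Field k] [AddCommGroup L] [Module k L]
    (b : L →ₗ[k] L →ₗ[k] L) (τ : L →ₗ[k] k) (a x y : L) : L :=
  τ a • b x y + b a (τ y • x - τ x • y)

/-- Let `(L, [·,·], α)` be a Hom-Lie algebra, `τ` a trace
function, and `β` a linear map satisfying the three compatibility conditions
`τ(α(x))τ(y) = τ(x)τ(α(y))`, `τ(β(x))τ(y) = τ(x)τ(β(y))`, and
`τ(α(x))β(y) = τ(β(x))α(y)`.  If `a ∈ L` satisfies `α(a) = a`, then
`L'_τ = (L, [·,·]'_τ, β)` with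
`[x,y]'_τ = τ(a)[x,y] + [a, τ(y)x − τ(x)y]` is a Hom-Lie algebra. -/
theorem reduced_tau_homLie
    {k L : Type*} [Field k] [CharZero k] [AddCommGroup L] [Module k L]
    (b : L →ₗ[k] L →ₗ[k] L) (α : L →ₗ[k] L)
    (hanti : ∀ x y : L, b x y = - b y x)
    (hjac : ∀ x y z : L,
      b (b x y) (α z) + b (b z x) (α y) + b (b y z) (α x) = 0)
    (τ : L →ₗ[k] k)
    (htrace : ∀ x y : L, τ (b x y) = 0)
    (β : L →ₗ[k] L)
    (h1 : ∀ x y : L, τ (α x) * τ y = τ x * τ (α y))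
    (h2 : ∀ x y : L, τ (β x) * τ y = τ x * τ (β y))
    (h3 : ∀ x y : L, τ (α x) • β y = τ (β x) • α y)
    (a : L) (ha : α a = a) :
    -- anti-symmetry of the reduced bracket
    (∀ x y : L, tauBracket b τ a x y = - tauBracket b τ a y x) ∧
    -- the Hom-Jacobi identity for (L, [·,·]'_τ, β)
    (∀ x y z : L,
      tauBracket b τ a (tauBracket b τ a x y) (β z)
        + tauBracket b τ a (tauBracket b τ a z x) (β y)
        + tauBracket b τ a (tauBracket b τ a y z) (β x) = 0) := by
  constructor
  · intro x y
    simp only [tauBracket, map_sub, map_smul]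
    linear_combination (norm := module) (τ a) • hanti x y
  · have hba : ∀ u v : L, b a (b u v) = - b a (b v u) := fun u v => by
      rw [hanti u v, map_neg]
    have key : ∀ u v : L, b (b a u) (α v) = b (b a v) (α u) + b a (b u v) := by
      intro u v
      have h := hjac a u v
      rw [ha, hanti v a, hanti (b u v) a] at h
      simp only [map_neg, LinearMap.neg_apply] at h
      linear_combination (norm := module) h
    intro x y z
    by_cases ht : τ a = 0
    · simp only [tauBracket, ht, zero_smul, zero_add, map_sub, map_smul,
        LinearMap.add_apply, LinearMap.sub_apply, LinearMap.smul_apply,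
        map_add, htrace, mul_zero, zero_mul, smul_zero, zero_sub, sub_zero,
        add_zero, neg_zero]
      linear_combination (norm := module)
        (h2 z y) • (b a (b a x)) + (h2 x z) • (b a (b a y)) + (h2 y x) • (b a (b a z))
    · have hτα : ∀ u : L, τ (α u) = τ u := by
        intro u
        have h := h1 a u
        rw [ha] at h
        exact (mul_left_cancel₀ ht h).symm
      have hβ : ∀ u : L, β u = ((τ a)⁻¹ * τ (β a)) • α u := by
        intro u
        have h := h3 a u
        rw [ha] at h
        rw [mul_smul, ← h, inv_smul_smul₀ ht]
      set r := (τ a)⁻¹ * τ (β a) with hr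
      set t := τ a with htt
      simp only [tauBracket, hβ, map_add, map_sub, map_smul,
        LinearMap.add_apply, LinearMap.sub_apply, LinearMap.smul_apply,
        htrace, hτα, mul_zero, zero_mul, smul_zero, zero_smul, sub_zero,
        zero_sub, add_zero, zero_add, smul_eq_mul]
      linear_combination (norm := module)
        (r * t^2) • hjac x y z
        + (r * t * τ y) • key x z + (r * t * τ x) • key z y + (r * t * τ z) • key y x
        + (r * t * τ z) • hba x y + (r * t * τ y) • hba z x + (r * t * τ x) • hba y z
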